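/- arXiv:2205.05118 — 7 statements merged into one kernel-verified Lean document; each statement's English description precedes it below -/
import Mathlib

section
/- Let V be a finite set and let H ≤ G be subgroups of the symmetric group on V, with H (and hence G) acting transitively on V. Then for every intersecting subset F of G there exists an intersecting subset F' of H such that |F| · |H| ≤ |F'| · |G|. (Consequently the intersection density of G is at most the intersection density of H.) -/
/-- If `H ≤ G` are subgroups of `Sym(V)` with `H` transitive on the finite set
`V`, then for every intersecting subset `F` of `G` there is an intersecting subset `F'` of `H`
with `|F| ⬝ |H| ≤ |F'| ⬝ |G|`. -/
theorem intersection_density_le_of_subgroup {V : Type*} [Fintype V]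
    (G H : Subgroup (Equiv.Perm V)) (hHG : H ≤ G)
    (htrans : ∀ u v : V, ∃ h ∈ H, h u = v)
    (F : Finset (Equiv.Perm V)) (hFG : (F : Set (Equiv.Perm V)) ⊆ (G : Set (Equiv.Perm V)))
    (hF : ∀ g ∈ F, ∀ h ∈ F, ∃ v : V, g v = h v) :
    ∃ F' : Finset (Equiv.Perm V), (F' : Set (Equiv.Perm V)) ⊆ (H : Set (Equiv.Perm V)) ∧
      (∀ g ∈ F', ∀ h ∈ F', ∃ v : V, g v = h v) ∧
      F.card * Nat.card H ≤ F'.card * Nat.card G := by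
  classical
  rcases F.eq_empty_or_nonempty with rfl | ⟨g₁, hg₁⟩
  · exact ⟨∅, by simp, by simp, by simp⟩
  set q : Equiv.Perm V → Equiv.Perm V ⧸ H := QuotientGroup.mk with hq
  set T : Finset (Equiv.Perm V ⧸ H) := F.image q with hT
  have hTne : T.Nonempty := ⟨q g₁, Finset.mem_image_of_mem _ hg₁⟩
  obtain ⟨y, hyT, hymax⟩ :=
    T.exists_max_image (fun y => (F.filter (fun g => q g = y)).card) hTne
  set fib : Finset (Equiv.Perm V) := F.filter (fun g => q g = y) with hfib
  obtain ⟨g₀, hg₀⟩ : fib.Nonempty := by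
    obtain ⟨g, hg, hgq⟩ := Finset.mem_image.mp hyT
    exact ⟨g, Finset.mem_filter.mpr ⟨hg, hgq⟩⟩
  have hg₀F : g₀ ∈ F := (Finset.mem_filter.mp hg₀).1
  have hg₀q : q g₀ = y := (Finset.mem_filter.mp hg₀).2
  -- the translated fiber
  set F' : Finset (Equiv.Perm V) := fib.image (fun g => g₀⁻¹ * g) with hF'
  have hinj : Set.InjOn (fun g => g₀⁻¹ * g) fib := fun a _ b _ h => by
    simpa using mul_left_cancel (a := g₀⁻¹) h
  have hcardF' : F'.card = fib.card := Finset.card_image_of_injOn hinj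
  refine ⟨F', ?_, ?_, ?_⟩
  · intro x hx
    obtain ⟨g, hg, rfl⟩ := Finset.mem_image.mp (by exact_mod_cast hx)
    have hgq : q g = y := (Finset.mem_filter.mp hg).2
    have : (g₀ : Equiv.Perm V ⧸ H) = g := by
      show q g₀ = q g; rw [hg₀q, hgq]
    exact QuotientGroup.eq.mp this
  · intro a ha b hb
    obtain ⟨x, hx, rfl⟩ := Finset.mem_image.mp ha
    obtain ⟨z, hz, rfl⟩ := Finset.mem_image.mp hb
    obtain ⟨v, hv⟩ := hF x (Finset.mem_filter.mp hx).1 z (Finset.mem_filter.mp hz).1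
    exact ⟨v, by simp [Equiv.Perm.mul_apply, hv]⟩
  · -- counting
    set GF : Finset (Equiv.Perm V) := (G : Set (Equiv.Perm V)).toFinset with hGF
    set HF : Finset (Equiv.Perm V) := (H : Set (Equiv.Perm V)).toFinset with hHF
    have hcardG : Nat.card G = GF.card := by
      rw [hGF, Set.toFinset_card, ← Nat.card_eq_fintype_card]; rfl
    have hcardH : Nat.card H = HF.card := by
      rw [hHF, Set.toFinset_card, ← Nat.card_eq_fintype_card]; rfl
    -- F.card ≤ T.card * fib.card
    have hFle : F.card ≤ T.card * fib.card := by
      have h1 : F.card = ∑ b ∈ T, (F.filter (fun g => q g = b)).card :=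
        Finset.card_eq_sum_card_fiberwise (fun x hx => Finset.mem_image_of_mem _ hx)
      calc F.card = ∑ b ∈ T, (F.filter (fun g => q g = b)).card := h1
        _ ≤ ∑ _b ∈ T, fib.card := Finset.sum_le_sum (fun b hb => hymax b hb)
        _ = T.card * fib.card := by rw [Finset.sum_const, smul_eq_mul]
    -- T.card * |H| ≤ |G|
    have hTH : T.card * HF.card ≤ GF.card := by
      have hfiber : ∀ y' ∈ T, HF.card ≤ (GF.filter (fun x => q x = y')).card := by
        intro y' hy'
        obtain ⟨g', hg'F, hg'q⟩ := Finset.mem_image.mp hy'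
        have hinj' : Set.InjOn (fun h => g' * h) HF := fun a _ b _ h => by
          simpa using mul_left_cancel (a := g') h
        have himg : HF.image (fun h => g' * h) ⊆ GF.filter (fun x => q x = y') := by
          intro x hx
          obtain ⟨h, hh, rfl⟩ := Finset.mem_image.mp hx
          have hhH : h ∈ H := by simpa [hHF] using hh
          refine Finset.mem_filter.mpr ⟨?_, ?_⟩
          · simp only [hGF, Set.mem_toFinset]
            exact mul_mem (hFG hg'F) (hHG hhH)
          · have : (g' : Equiv.Perm V ⧸ H) = (g' * h : Equiv.Perm V) :=
              QuotientGroup.eq.mpr (by simpa using hhH)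
            show q (g' * h) = y'
            rw [← hg'q]; exact this.symm
        calc HF.card = (HF.image (fun h => g' * h)).card :=
              (Finset.card_image_of_injOn hinj').symm
          _ ≤ _ := Finset.card_le_card himg
      have hpart : GF.card = ∑ b ∈ GF.image q, (GF.filter (fun x => q x = b)).card :=
        Finset.card_eq_sum_card_fiberwise (fun x hx => Finset.mem_image_of_mem _ hx)
      have hTsub : T ⊆ GF.image q := by
        intro b hb
        obtain ⟨g, hgF, rfl⟩ := Finset.mem_image.mp hb
        exact Finset.mem_image_of_mem _ (by simpa [hGF, Set.mem_toFinset] using hFG hgF)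
      calc T.card * HF.card = ∑ _b ∈ T, HF.card := by rw [Finset.sum_const, smul_eq_mul]
        _ ≤ ∑ b ∈ T, (GF.filter (fun x => q x = b)).card := Finset.sum_le_sum hfiber
        _ ≤ ∑ b ∈ GF.image q, (GF.filter (fun x => q x = b)).card :=
            Finset.sum_le_sum_of_subset hTsub
        _ = GF.card := hpart.symm
    calc F.card * Nat.card H ≤ (T.card * fib.card) * HF.card := by
          rw [hcardH]; exact Nat.mul_le_mul_right _ hFle
      _ = fib.card * (T.card * HF.card) := by ring
      _ ≤ fib.card * GF.card := Nat.mul_le_mul_left _ hTH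
      _ = F'.card * Nat.card G := by rw [hcardF', hcardG]
end

section
/- Let q = p^m be an odd prime power with q ≡ 1 (mod 4). Then the action of SL(2,F_q) on the set of 3-element subsets of the projective line ℙ¹(F_q) has exactly two orbits, and both orbits have size (1/2)·binom(q+1, 3). -/
open scoped Pointwise MatrixGroups

noncomputable section

/-- The projective line over `K`. -/
abbrev Proj (K : Type*) [Field K] := Projectivization K (Fin 2 → K)

variable {K : Type*} [Field K]

lemma GLmulVecLin_injective (g : GL (Fin 2) K) :
    Function.Injective ((g : Matrix (Fin 2) (Fin 2) K).mulVecLin) := by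
  intro u v huv
  have h := congrArg ((((g⁻¹ : GL (Fin 2) K) : Matrix (Fin 2) (Fin 2) K)).mulVecLin) huv
  simp only [Matrix.mulVecLin_apply, Matrix.mulVec_mulVec] at h
  rw [show ((g⁻¹ : GL (Fin 2) K) : Matrix (Fin 2) (Fin 2) K) * (g : Matrix (Fin 2) (Fin 2) K) = 1
    from g.inv_mul, Matrix.one_mulVec, Matrix.one_mulVec] at h
  exact h

lemma GLmulVec_ne_zero (g : GL (Fin 2) K) {v : Fin 2 → K} (hv : v ≠ 0) :
    (g : Matrix (Fin 2) (Fin 2) K).mulVec v ≠ 0 := by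
  intro h
  apply hv
  have : ((g : Matrix (Fin 2) (Fin 2) K)).mulVecLin v =
      ((g : Matrix (Fin 2) (Fin 2) K)).mulVecLin 0 := by
    simpa [Matrix.mulVecLin_apply] using h
  simpa using GLmulVecLin_injective g this

/-- The action of `GL(2,K)` on the projective line by matrix-vector multiplication on
representatives. -/
instance GLProjAction : MulAction (GL (Fin 2) K) (Proj K) where
  smul g x := Projectivization.map ((g : Matrix (Fin 2) (Fin 2) K).mulVecLin)
    (GLmulVecLin_injective g) x
  one_smul x := by
    induction x using Projectivization.ind with
    | h v hv =>
      show Projectivization.map _ _ _ = _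
      simp [Projectivization.map_mk]
  mul_smul g h x := by
    induction x using Projectivization.ind with
    | h v hv =>
      show Projectivization.map _ _ _ =
        Projectivization.map _ _ (Projectivization.map _ _ _)
      simp [Projectivization.map_mk, Matrix.mulVecLin_apply, Matrix.mulVec_mulVec,
        Units.val_mul]

lemma GL_smul_mk (g : GL (Fin 2) K) (v : Fin 2 → K) (hv : v ≠ 0) :
    g • Projectivization.mk K v hv =
      Projectivization.mk K ((g : Matrix (Fin 2) (Fin 2) K).mulVec v)
        (GLmulVec_ne_zero g hv) := by
  show Projectivization.map _ _ _ = _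
  simp [Projectivization.map_mk, Matrix.mulVecLin_apply]

/-- The action of `SL(2,K)` on the projective line. -/
instance SLProjAction : MulAction (Matrix.SpecialLinearGroup (Fin 2) K) (Proj K) :=
  MulAction.compHom _ (Matrix.SpecialLinearGroup.toGL)

end

noncomputable section
variable {K : Type*} [Field K]

lemma center_smul_eq (c : GL (Fin 2) K) (hc : c ∈ Subgroup.center (GL (Fin 2) K))
    (x : Proj K) : c • x = x := by
  have hcomm : ∀ t : Matrix.TransvectionStruct (Fin 2) K,
      Commute t.toMatrix (c : Matrix (Fin 2) (Fin 2) K) := by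
    intro t
    let u : GL (Fin 2) K := ⟨t.toMatrix, t.inv.toMatrix, t.mul_inv, t.inv_mul⟩
    have h := Subgroup.mem_center_iff.mp hc u
    have := congrArg Units.val h
    simpa [u, Commute, SemiconjBy] using this
  obtain ⟨r, hr⟩ := Matrix.mem_range_scalar_of_commute_transvectionStruct hcomm
  have hr0 : r ≠ 0 := by
    intro h0
    have hne : (![1, 0] : Fin 2 → K) ≠ 0 := by
      intro h
      have := congrFun h 0
      simp at this
    have := GLmulVec_ne_zero c hne
    rw [← hr, h0] at this
    rw [show (0 : K) = (0 : K) from rfl] at this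
    apply this
    funext i
    simp [Matrix.mulVec_diagonal]
  induction x using Projectivization.ind with
  | h v hv =>
    rw [GL_smul_mk]
    rw [Projectivization.mk_eq_mk_iff]
    refine ⟨Units.mk0 r hr0, ?_⟩
    rw [← hr]
    funext i
    simp [Matrix.mulVec_diagonal]

end

noncomputable section

/-- The projective general linear group `PGL(2,K) = GL(2,K)/Z(GL(2,K))`. -/
abbrev PGL2 (K : Type*) [Field K] : Type _ :=
  GL (Fin 2) K ⧸ Subgroup.center (GL (Fin 2) K)

variable {K : Type*} [Field K]

/-- The action of `GL(2,K)` on the projective line descends to `PGL(2,K)`. -/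
instance PGLProjSMul : SMul (PGL2 K) (Proj K) :=
  ⟨fun g x => Quotient.liftOn' g (fun a => a • x) (by
    intro a b hab
    rw [QuotientGroup.leftRel_apply] at hab
    show a • x = b • x
    have hb : b = a * (a⁻¹ * b) := by group
    rw [hb, mul_smul, center_smul_eq _ hab])⟩

instance PGLProjAction : MulAction (PGL2 K) (Proj K) where
  one_smul x := center_smul_eq 1 (Subgroup.one_mem _) x
  mul_smul g h x := by
    induction g using Quotient.inductionOn' with
    | h a =>
      induction h using Quotient.inductionOn' with
      | h b => exact mul_smul a b x

lemma PGL2_smul_mk' (a : GL (Fin 2) K) (x : Proj K) :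
    (QuotientGroup.mk a : PGL2 K) • x = a • x := rfl

/-- The natural homomorphism `SL(2,K) → PGL(2,K)`. -/
def SLtoPGL2 (K : Type*) [Field K] : Matrix.SpecialLinearGroup (Fin 2) K →* PGL2 K :=
  (QuotientGroup.mk' (Subgroup.center (GL (Fin 2) K))).comp Matrix.SpecialLinearGroup.toGL

/-- `PSL(2,K)`, realized as the image of `SL(2,K)` in `PGL(2,K)`. -/
def PSL2 (K : Type*) [Field K] : Subgroup (PGL2 K) := (SLtoPGL2 K).range

/-- A subset `F` of a group `G` acting on the projective line over `K` is *intersecting for the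
action on `k`-element subsets* if any two of its elements agree on some `k`-element subset of
the projective line. -/
def IntersectingOnSubsets (G : Type*) [Group G] (K : Type*) [Field K]
    [MulAction G (Proj K)] (k : ℕ) (F : Set G) : Prop :=
  ∀ g ∈ F, ∀ h ∈ F, ∃ S : Set (Proj K), S.ncard = k ∧ g • S = h • S

end

/-!
`GL(2, K)` acts transitively on the 3-subsets of `ℙ¹(K)`, so an `SL(2, K)`-orbit is determined by
the square class of `det g` for any `g` carrying `{∞, 0, 1}` onto the subset, provided every `g`
stabilizing `{∞, 0, 1}` setwise has square determinant. For that, take representatives `u, v, w`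
of the three points and the cyclic product of minors `[u, v] [v, w] [w, u]`: applying `g`
multiplies it by `(det g)³`, rescaling the representatives multiplies it by a square, and
permuting the points changes only its sign, which is harmless when `-1` is a square. So for `q ≡ 1 (mod 4)` there are exactly two
orbits, that of `{∞, 0, 1}` and its image under a matrix `d` of nonsquare determinant, and
translation by `d` maps the first bijectively onto the second.
-/

open Matrix

section ProjectiveLine

variable {K : Type*} [Field K]

def wedge (u v : Fin 2 → K) : K := u 0 * v 1 - u 1 * v 0

lemma wedge_comm (u v : Fin 2 → K) : wedge v u = -wedge u v := by
  rw [wedge, wedge]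
  ring

lemma wedge_smul (a b : K) (u v : Fin 2 → K) : wedge (a • u) (b • v) = a * b * wedge u v := by
  simp only [wedge, Pi.smul_apply, smul_eq_mul]
  ring

lemma wedge_mulVec (M : Matrix (Fin 2) (Fin 2) K) (u v : Fin 2 → K) :
    wedge (M *ᵥ u) (M *ᵥ v) = M.det * wedge u v := by
  simp only [wedge, mulVec, dotProduct, Fin.sum_univ_two, det_fin_two]
  ring

lemma mk_eq_mk_iff_wedge_eq_zero {u v : Fin 2 → K} (hu : u ≠ 0) (hv : v ≠ 0) :
    Projectivization.mk K u hu = Projectivization.mk K v hv ↔ wedge u v = 0 := by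
  rw [Projectivization.mk_eq_mk_iff']
  constructor
  · rintro ⟨a, rfl⟩
    simp only [wedge, Pi.smul_apply, smul_eq_mul]
    ring
  · intro h
    obtain ⟨i, hi⟩ : ∃ i, v i ≠ 0 := Function.ne_iff.mp hv
    refine ⟨u i / v i, funext fun j => ?_⟩
    simp only [Pi.smul_apply, smul_eq_mul, wedge] at h ⊢
    field_simp
    fin_cases i <;> fin_cases j <;> simp <;> grind

-- Representatives of `∞`, `0` and `1`.
def stdVec : Fin 3 → Fin 2 → K := ![![1, 0], ![0, 1], ![1, 1]]

lemma stdVec_ne_zero (i : Fin 3) : stdVec (K := K) i ≠ 0 := by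
  fin_cases i <;> simp [stdVec, funext_iff, Fin.forall_fin_two]

def stdPoint (i : Fin 3) : Proj K := Projectivization.mk K (stdVec i) (stdVec_ne_zero i)

variable (K) in
def stdTriple : Set (Proj K) := Set.range stdPoint

lemma stdPoint_injective : Function.Injective (stdPoint (K := K)) := by
  intro i j h
  rw [stdPoint, stdPoint, mk_eq_mk_iff_wedge_eq_zero] at h
  fin_cases i <;> fin_cases j <;> simp_all [wedge, stdVec]

lemma ncard_stdTriple : (stdTriple K).ncard = 3 := by
  rw [stdTriple, Set.ncard_range_of_injective stdPoint_injective, Nat.card_fin]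

lemma smul_stdTriple (g : GL (Fin 2) K) :
    g • stdTriple K = {g • stdPoint 0, g • stdPoint 1, g • stdPoint 2} := by
  ext x
  simp [stdTriple, Set.smul_set_range, Fin.exists_fin_succ, eq_comm]

lemma exists_smul_stdPoint_eq {x y z : Proj K} (hxy : x ≠ y) (hxz : x ≠ z) (hyz : y ≠ z) :
    ∃ g : GL (Fin 2) K, g • stdPoint 0 = x ∧ g • stdPoint 1 = y ∧ g • stdPoint 2 = z := by
  induction x using Projectivization.ind with | h u hu =>
  induction y using Projectivization.ind with | h v hv =>
  induction z using Projectivization.ind with | h w hw =>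
  rw [Ne, mk_eq_mk_iff_wedge_eq_zero] at hxy hxz hyz
  -- Cramer's rule: `w = a • u + b • v`; take the matrix with columns `a • u` and `b • v`.
  set a := wedge w v / wedge u v with ha
  set b := wedge u w / wedge u v with hb
  have ha0 : a ≠ 0 := div_ne_zero (by rwa [wedge_comm, neg_ne_zero]) hxy
  have hb0 : b ≠ 0 := div_ne_zero hxz hxy
  let M : Matrix (Fin 2) (Fin 2) K := !![a * u 0, b * v 0; a * u 1, b * v 1]
  have hM : M.det ≠ 0 := by
    rw [show M.det = a * b * wedge u v by rw [det_fin_two_of, wedge]; ring]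
    exact mul_ne_zero (mul_ne_zero ha0 hb0) hxy
  refine ⟨GeneralLinearGroup.mkOfDetNeZero M hM, ?_, ?_, ?_⟩ <;>
    simp [stdPoint, GL_smul_mk, mk_eq_mk_iff_wedge_eq_zero, M, stdVec, wedge]
  · ring
  · ring
  · rw [ha, hb]
    simp only [wedge] at hxy ⊢
    field_simp
    ring

lemma exists_smul_stdTriple_eq {U : Set (Proj K)} (hU : U.ncard = 3) :
    ∃ g : GL (Fin 2) K, g • stdTriple K = U := by
  obtain ⟨x, y, z, hxy, hxz, hyz, rfl⟩ := Set.ncard_eq_three.mp hU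
  obtain ⟨g, hx, hy, hz⟩ := exists_smul_stdPoint_eq hxy hxz hyz
  exact ⟨g, by rw [smul_stdTriple, hx, hy, hz]⟩

def cyclicWedge (u v w : Fin 2 → K) : K := wedge u v * wedge v w * wedge w u

lemma cyclicWedge_mulVec (M : Matrix (Fin 2) (Fin 2) K) (u v w : Fin 2 → K) :
    cyclicWedge (M *ᵥ u) (M *ᵥ v) (M *ᵥ w) = M.det ^ 3 * cyclicWedge u v w := by
  simp only [cyclicWedge, wedge_mulVec]
  ring

lemma cyclicWedge_smul (a b c : K) (u v w : Fin 2 → K) :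
    cyclicWedge (a • u) (b • v) (c • w) = (a * b * c) ^ 2 * cyclicWedge u v w := by
  simp only [cyclicWedge, wedge_smul]
  ring

lemma cyclicWedge_stdVec : cyclicWedge (stdVec 0) (stdVec 1) (stdVec 2) = (1 : K) := by
  simp [cyclicWedge, wedge, stdVec]

lemma cyclicWedge_stdVec_mem (i j k : Fin 3) :
    cyclicWedge (stdVec i) (stdVec j) (stdVec k) ∈ ({0, 1, -1} : Set K) := by
  fin_cases i <;> fin_cases j <;> fin_cases k <;> simp [cyclicWedge, wedge, stdVec]

theorem isSquare_det_of_smul_stdTriple (hneg : IsSquare (-1 : K)) {g : GL (Fin 2) K}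
    (hg : g • stdTriple K = stdTriple K) : IsSquare (g : Matrix (Fin 2) (Fin 2) K).det := by
  have hperm (i : Fin 3) :
      ∃ j, ∃ c : K, (g : Matrix (Fin 2) (Fin 2) K) *ᵥ stdVec i = c • stdVec j := by
    obtain ⟨j, hj⟩ : g • stdPoint i ∈ stdTriple K := hg ▸ Set.smul_mem_smul_set ⟨i, rfl⟩
    rw [eq_comm, stdPoint, stdPoint, GL_smul_mk, Projectivization.mk_eq_mk_iff'] at hj
    obtain ⟨c, hc⟩ := hj
    exact ⟨j, c, hc.symm⟩
  choose σ c hc using hperm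
  have hcube : (g : Matrix (Fin 2) (Fin 2) K).det ^ 3 =
      (c 0 * c 1 * c 2) ^ 2 * cyclicWedge (stdVec (σ 0)) (stdVec (σ 1)) (stdVec (σ 2)) := by
    rw [← cyclicWedge_smul, ← hc, ← hc, ← hc, cyclicWedge_mulVec, cyclicWedge_stdVec, mul_one]
  have hsq : IsSquare ((g : Matrix (Fin 2) (Fin 2) K).det ^ 3) := by
    rw [hcube]
    refine (IsSquare.sq _).mul ?_
    rcases cyclicWedge_stdVec_mem (K := K) (σ 0) (σ 1) (σ 2) with h | h | h <;> rw [h]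
    · exact .zero
    · exact .one
    · exact hneg
  have hdet := GeneralLinearGroup.det_ne_zero g
  rw [show (g : Matrix (Fin 2) (Fin 2) K).det = _ ^ 3 * (_ ^ 2)⁻¹ by field_simp]
  exact hsq.mul (IsSquare.sq _).inv

lemma SL_smul_eq_toGL_smul (h : SL(2, K)) (U : Set (Proj K)) :
    h • U = SpecialLinearGroup.toGL h • U :=
  rfl

lemma smul_mem_orbit_of_isSquare_det {g : GL (Fin 2) K}
    (hg : IsSquare (g : Matrix (Fin 2) (Fin 2) K).det) (U : Set (Proj K)) :
    g • U ∈ MulAction.orbit SL(2, K) U := by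
  obtain ⟨c, hc⟩ := hg
  have hc0 : c ≠ 0 := by
    rintro rfl
    exact GeneralLinearGroup.det_ne_zero g (by simpa using hc)
  let h : SL(2, K) := ⟨c⁻¹ • (g : Matrix (Fin 2) (Fin 2) K), by
    rw [det_smul, hc, Fintype.card_fin]
    field_simp⟩
  have hx (x : Proj K) : SpecialLinearGroup.toGL h • x = g • x := by
    induction x using Projectivization.ind with | h v hv =>
    rw [GL_smul_mk, GL_smul_mk, Projectivization.mk_eq_mk_iff']
    exact ⟨c⁻¹, (smul_mulVec _ _ _).symm⟩
  refine ⟨h, ?_⟩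
  change h • U = g • U
  rw [SL_smul_eq_toGL_smul, ← Set.image_smul, ← Set.image_smul]
  exact Set.image_congr fun x _ => hx x

lemma det_conj_toGL (g : GL (Fin 2) K) (h : SL(2, K)) :
    ((g * SpecialLinearGroup.toGL h * g⁻¹ : GL (Fin 2) K) : Matrix (Fin 2) (Fin 2) K).det = 1 := by
  simp [GeneralLinearGroup.det_ne_zero]

lemma orbit_smul_eq_smul_orbit (g : GL (Fin 2) K) (U : Set (Proj K)) :
    MulAction.orbit SL(2, K) (g • U) = g • MulAction.orbit SL(2, K) U := by
  ext V
  rw [Set.mem_smul_set_iff_inv_smul_mem]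
  constructor
  · rintro ⟨h, rfl⟩
    have := smul_mem_orbit_of_isSquare_det (g := g⁻¹ * SpecialLinearGroup.toGL h * g⁻¹⁻¹)
      (by rw [det_conj_toGL]; exact .one) U
    simpa [mul_smul, SL_smul_eq_toGL_smul] using this
  · rintro ⟨h, hh⟩
    have := smul_mem_orbit_of_isSquare_det (g := g * SpecialLinearGroup.toGL h * g⁻¹)
      (by rw [det_conj_toGL]; exact .one) (g • U)
    simpa [mul_smul, ← SL_smul_eq_toGL_smul, hh] using this

theorem smul_stdTriple_mem_orbit_iff (hneg : IsSquare (-1 : K)) (g : GL (Fin 2) K) :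
    g • stdTriple K ∈ MulAction.orbit SL(2, K) (stdTriple K) ↔
      IsSquare (g : Matrix (Fin 2) (Fin 2) K).det := by
  refine ⟨fun ⟨h, hh⟩ => ?_, fun hg => smul_mem_orbit_of_isSquare_det hg _⟩
  have hstab : (g⁻¹ * SpecialLinearGroup.toGL h) • stdTriple K = stdTriple K := by
    rw [mul_smul, inv_smul_eq_iff, ← SL_smul_eq_toGL_smul]
    exact hh
  simpa using isSquare_det_of_smul_stdTriple hneg hstab

end ProjectiveLine

lemma Set.ncard_setOf_ncard_eq (X : Type*) [Finite X] (k : ℕ) :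
    {U : Set X | U.ncard = k}.ncard = (Nat.card X).choose k := by
  simpa [Set.ncard_univ] using Set.ncard_powerset_ncard (Set.toFinite (Set.univ : Set X)) k

section FiniteField

variable {K : Type*} [Field K] [Fintype K]

lemma FiniteField.isSquare_mul_of_not_isSquare {a b : K} (ha : ¬IsSquare a)
    (hb : ¬IsSquare b) : IsSquare (a * b) := by
  classical
  have hab : a * b ≠ 0 :=
    mul_ne_zero (by rintro rfl; exact ha .zero) (by rintro rfl; exact hb .zero)
  rw [← quadraticChar_one_iff_isSquare hab, map_mul,
    quadraticChar_neg_one_iff_not_isSquare.mpr ha, quadraticChar_neg_one_iff_not_isSquare.mpr hb]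
  rfl

lemma exists_not_isSquare_det (hK : ringChar K ≠ 2) :
    ∃ d : GL (Fin 2) K, ¬IsSquare (d : Matrix (Fin 2) (Fin 2) K).det := by
  obtain ⟨ε, hε⟩ := FiniteField.exists_nonsquare hK
  obtain ⟨d, hd⟩ :=
    GeneralLinearGroup.det_surjective (n := Fin 2) (Units.mk0 ε (by rintro rfl; exact hε .zero))
  exact ⟨d, by rwa [← GeneralLinearGroup.val_det_apply, hd]⟩

variable {d : GL (Fin 2) K} (hd : ¬IsSquare (d : Matrix (Fin 2) (Fin 2) K).det)
include hd

lemma mem_orbit_stdTriple_or_mem_orbit_smul {U : Set (Proj K)} (hU : U.ncard = 3) :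
    U ∈ MulAction.orbit SL(2, K) (stdTriple K) ∨
      U ∈ MulAction.orbit SL(2, K) (d • stdTriple K) := by
  obtain ⟨g, rfl⟩ := exists_smul_stdTriple_eq hU
  by_cases hg : IsSquare (g : Matrix (Fin 2) (Fin 2) K).det
  · exact .inl (smul_mem_orbit_of_isSquare_det hg _)
  · have hgd : IsSquare ((g * d⁻¹ : GL (Fin 2) K) : Matrix (Fin 2) (Fin 2) K).det := by
      simpa using FiniteField.isSquare_mul_of_not_isSquare hg (isSquare_inv.not.mpr hd)
    exact .inr (by simpa [mul_smul] using smul_mem_orbit_of_isSquare_det hgd (d • stdTriple K))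

theorem two_mul_ncard_orbit_stdTriple (hneg : IsSquare (-1 : K)) :
    2 * (MulAction.orbit SL(2, K) (stdTriple K)).ncard = (Fintype.card K + 1).choose 3 := by
  set S := stdTriple K
  have hdisj : Disjoint (MulAction.orbit SL(2, K) S) (MulAction.orbit SL(2, K) (d • S)) :=
    (MulAction.orbit.eq_or_disjoint _ _).resolve_left fun h =>
      (smul_stdTriple_mem_orbit_iff hneg d).not.mpr hd (MulAction.orbit_eq_iff.mp h.symm)
  have hunion :
      MulAction.orbit SL(2, K) S ∪ MulAction.orbit SL(2, K) (d • S) = {U | U.ncard = 3} := by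
    refine Set.Subset.antisymm ?_ fun U hU => mem_orbit_stdTriple_or_mem_orbit_smul hd hU
    rintro _ (⟨h, rfl⟩ | ⟨h, rfl⟩) <;> simp [S, Set.ncard_smul_set, ncard_stdTriple]
  calc 2 * (MulAction.orbit SL(2, K) S).ncard
      = (MulAction.orbit SL(2, K) S).ncard + (MulAction.orbit SL(2, K) (d • S)).ncard := by
        rw [orbit_smul_eq_smul_orbit, Set.ncard_smul_set, two_mul]
    _ = {U : Set (Proj K) | U.ncard = 3}.ncard := by rw [← Set.ncard_union_eq hdisj, hunion]
    _ = (Fintype.card K + 1).choose 3 := by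
        rw [Set.ncard_setOf_ncard_eq,
          Projectivization.card_of_finrank_two K _ (Module.finrank_fin_fun K),
          Nat.card_eq_fintype_card]

end FiniteField

open scoped Pointwise in
theorem sl2_two_orbits_on_three_subsets_general (p m : ℕ) [Fact p.Prime] (hm : 1 ≤ m)
    (hq : p ^ m % 4 = 1) :
    ∃ S T : Set (Proj (GaloisField p m)),
      S.ncard = 3 ∧ T.ncard = 3 ∧
      T ∉ MulAction.orbit (Matrix.SpecialLinearGroup (Fin 2) (GaloisField p m)) S ∧
      (∀ U : Set (Proj (GaloisField p m)), U.ncard = 3 →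
        U ∈ MulAction.orbit (Matrix.SpecialLinearGroup (Fin 2) (GaloisField p m)) S ∨
        U ∈ MulAction.orbit (Matrix.SpecialLinearGroup (Fin 2) (GaloisField p m)) T) ∧
      2 * (MulAction.orbit (Matrix.SpecialLinearGroup (Fin 2) (GaloisField p m)) S).ncard
          = (p ^ m + 1).choose 3 ∧
      2 * (MulAction.orbit (Matrix.SpecialLinearGroup (Fin 2) (GaloisField p m)) T).ncard
          = (p ^ m + 1).choose 3 := by
  let _ : Fintype (GaloisField p m) := Fintype.ofFinite _
  have hcard : Fintype.card (GaloisField p m) = p ^ m := by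
    rw [← Nat.card_eq_fintype_card, GaloisField.card p m (by omega)]
  have hneg : IsSquare (-1 : GaloisField p m) := FiniteField.isSquare_neg_one_iff.mpr (by omega)
  have hchar : ringChar (GaloisField p m) ≠ 2 := fun h => by
    have := FiniteField.even_card_iff_char_two.mp h
    omega
  obtain ⟨d, hd⟩ := exists_not_isSquare_det hchar
  have hcount := two_mul_ncard_orbit_stdTriple hd hneg
  refine ⟨stdTriple _, d • stdTriple _, ncard_stdTriple,
    by rw [Set.ncard_smul_set, ncard_stdTriple], (smul_stdTriple_mem_orbit_iff hneg d).not.mpr hd,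
    fun U hU => mem_orbit_stdTriple_or_mem_orbit_smul hd hU, by rw [hcount, hcard], ?_⟩
  rw [orbit_smul_eq_smul_orbit, Set.ncard_smul_set, hcount, hcard]

open scoped Pointwise in
/-- For an odd prime power `q = p^m` with `q ≡ 1 (mod 4)`, the action of
`SL(2, F_q)` on the 3-element subsets of the projective line has exactly two orbits, each of
size `(1/2) ⬝ binom(q+1, 3)`. -/
theorem sl2_two_orbits_on_three_subsets (p m : ℕ) [Fact p.Prime] (hp : Odd p) (hm : 1 ≤ m)
    (hq : p ^ m % 4 = 1) :
    ∃ S T : Set (Proj (GaloisField p m)),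
      S.ncard = 3 ∧ T.ncard = 3 ∧
      T ∉ MulAction.orbit (Matrix.SpecialLinearGroup (Fin 2) (GaloisField p m)) S ∧
      (∀ U : Set (Proj (GaloisField p m)), U.ncard = 3 →
        U ∈ MulAction.orbit (Matrix.SpecialLinearGroup (Fin 2) (GaloisField p m)) S ∨
        U ∈ MulAction.orbit (Matrix.SpecialLinearGroup (Fin 2) (GaloisField p m)) T) ∧
      2 * (MulAction.orbit (Matrix.SpecialLinearGroup (Fin 2) (GaloisField p m)) S).ncard
          = (p ^ m + 1).choose 3 ∧
      2 * (MulAction.orbit (Matrix.SpecialLinearGroup (Fin 2) (GaloisField p m)) T).ncard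
          = (p ^ m + 1).choose 3 :=
  sl2_two_orbits_on_three_subsets_general p m hm hq
end

section
/- Let q = 2^m with m ≥ 1 and F_q = GaloisField 2 m. The set U of matrices [[1, a], [0, 1]] with a ∈ F_q is a subgroup of SL(2,F_q) of order q, and U is an intersecting set with respect to the induced action on 3-element subsets of ℙ¹(F_q). -/
open scoped Pointwise MatrixGroups

noncomputable section UnipAux
open Matrix Projectivization
variable {K : Type*} [Field K]

def unipSubgroup (K : Type*) [Field K] : Subgroup (Matrix.SpecialLinearGroup (Fin 2) K) where
  carrier := {M | ∃ a : K, (M : Matrix (Fin 2) (Fin 2) K) = !![1, a; 0, 1]}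
  one_mem' := ⟨0, by simp [Matrix.SpecialLinearGroup.coe_one, Matrix.one_fin_two]⟩
  mul_mem' := by
    rintro g h ⟨a, ha⟩ ⟨b, hb⟩
    exact ⟨b + a, by
      rw [Matrix.SpecialLinearGroup.coe_mul, ha, hb, Matrix.mul_fin_two]
      norm_num⟩
  inv_mem' := by
    rintro g ⟨a, ha⟩
    exact ⟨-a, by
      rw [Matrix.SpecialLinearGroup.coe_inv, ha, Matrix.adjugate_fin_two]
      norm_num⟩

def unip (a : K) : Matrix.SpecialLinearGroup (Fin 2) K :=
  ⟨!![1, a; 0, 1], by simp [Matrix.det_fin_two_of]⟩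

def unipEquiv (K : Type*) [Field K] : K ≃ (unipSubgroup K) where
  toFun a := ⟨unip a, ⟨a, rfl⟩⟩
  invFun M := ((M : Matrix.SpecialLinearGroup (Fin 2) K) : Matrix (Fin 2) (Fin 2) K) 0 1
  left_inv a := by simp [unip]
  right_inv := by
    rintro ⟨M, a, ha⟩
    have h01 : (M : Matrix (Fin 2) (Fin 2) K) 0 1 = a := by rw [ha]; simp
    apply Subtype.ext
    apply Subtype.ext
    show (!![1, (M : Matrix (Fin 2) (Fin 2) K) 0 1; 0, 1] : Matrix (Fin 2) (Fin 2) K) = _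
    rw [h01, ha]

lemma vec_pt_ne_zero (x : K) : (![x, 1] : Fin 2 → K) ≠ 0 := by
  intro h
  have := congrFun h 1
  simp at this

lemma vec_inf_ne_zero : (![1, 0] : Fin 2 → K) ≠ 0 := by
  intro h
  have := congrFun h 0
  simp at this

lemma SL_smul_mk (g : Matrix.SpecialLinearGroup (Fin 2) K) (v : Fin 2 → K) (hv : v ≠ 0) :
    g • Projectivization.mk K v hv =
      Projectivization.mk K ((g : Matrix (Fin 2) (Fin 2) K).mulVec v)
        (GLmulVec_ne_zero (Matrix.SpecialLinearGroup.toGL g) hv) :=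
  GL_smul_mk (Matrix.SpecialLinearGroup.toGL g) v hv

lemma unip_mulVec_pt (a x : K) :
    ((unip a : Matrix.SpecialLinearGroup (Fin 2) K) :
      Matrix (Fin 2) (Fin 2) K).mulVec ![x, 1] = ![x + a, 1] := by
  funext i
  fin_cases i <;>
    simp [unip, Matrix.mulVec, dotProduct, Fin.sum_univ_two]

lemma unip_mulVec_inf (a : K) :
    ((unip a : Matrix.SpecialLinearGroup (Fin 2) K) :
      Matrix (Fin 2) (Fin 2) K).mulVec ![1, 0] = ![1, 0] := by
  funext i
  fin_cases i <;>
    simp [unip, Matrix.mulVec, dotProduct, Fin.sum_univ_two]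

def proj_pt (x : K) : Proj K := Projectivization.mk K ![x, 1] (vec_pt_ne_zero x)
def proj_inf : Proj K := Projectivization.mk K ![1, 0] vec_inf_ne_zero

lemma unip_smul_pt (a x : K) : unip a • proj_pt x = proj_pt (x + a) := by
  rw [proj_pt, SL_smul_mk]
  exact Projectivization.mk_eq_mk_iff' _ _ _ _ _ |>.mpr ⟨1, by rw [unip_mulVec_pt]; simp⟩

lemma unip_smul_inf (a : K) : unip a • (proj_inf : Proj K) = proj_inf := by
  rw [proj_inf, SL_smul_mk]
  exact Projectivization.mk_eq_mk_iff' _ _ _ _ _ |>.mpr ⟨1, by rw [unip_mulVec_inf]; simp⟩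

lemma proj_inf_ne_pt (x : K) : (proj_inf : Proj K) ≠ proj_pt x := by
  rw [proj_inf, proj_pt, Ne, Projectivization.mk_eq_mk_iff]
  rintro ⟨c, hc⟩
  have := congrFun hc 1
  simp [Units.smul_def] at this

lemma proj_pt_inj {x y : K} (h : proj_pt x = proj_pt y) : x = y := by
  rw [proj_pt, proj_pt, Projectivization.mk_eq_mk_iff] at h
  obtain ⟨c, hc⟩ := h
  have h1 := congrFun hc 1
  have h0 := congrFun hc 0
  simp [Units.smul_def] at h1 h0
  rw [h1, Units.val_one, one_mul] at h0
  exact h0.symm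

end UnipAux

/-- For `q = 2^m`, the unipotent upper-triangular matrices form a subgroup of
`SL(2, F_q)` of order `q` which is intersecting for the action on 3-element subsets of the
projective line. -/
theorem unipotent_subgroup_intersecting_three_subsets (m : ℕ) (hm : 1 ≤ m) :
    ∃ U : Subgroup (Matrix.SpecialLinearGroup (Fin 2) (GaloisField 2 m)),
      (U : Set (Matrix.SpecialLinearGroup (Fin 2) (GaloisField 2 m))) =
        {M : Matrix.SpecialLinearGroup (Fin 2) (GaloisField 2 m) | ∃ a : GaloisField 2 m,
          (M : Matrix (Fin 2) (Fin 2) (GaloisField 2 m)) = !![1, a; 0, 1]} ∧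
      Nat.card U = 2 ^ m ∧
      IntersectingOnSubsets _ (GaloisField 2 m) 3
        (U : Set (Matrix.SpecialLinearGroup (Fin 2) (GaloisField 2 m))) := by
  classical
  refine ⟨unipSubgroup _, rfl, ?_, ?_⟩
  · rw [Nat.card_congr (unipEquiv (GaloisField 2 m)).symm]
    exact GaloisField.card 2 m (by omega)
  · intro g hg h hh
    obtain ⟨a, ha⟩ := hg
    obtain ⟨b, hb⟩ := hh
    have hga : g = unip a := Subtype.ext ha
    have hhb : h = unip b := Subtype.ext hb
    by_cases hab : a = b
    · refine ⟨{proj_inf, proj_pt 0, proj_pt 1}, ?_, by rw [hga, hhb, hab]⟩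
      rw [Set.ncard_insert_of_notMem (by simp [proj_inf_ne_pt]) (Set.toFinite _),
        Set.ncard_pair (fun hpp => one_ne_zero ((proj_pt_inj hpp).symm))]
    · have hc : a + b ≠ 0 := by
        intro h0
        apply hab
        have h2 : a + b + b = 0 + b := by rw [h0]
        rwa [add_assoc, CharTwo.add_self_eq_zero, add_zero, zero_add] at h2
      refine ⟨{proj_inf, proj_pt 0, proj_pt (a + b)}, ?_, ?_⟩
      · rw [Set.ncard_insert_of_notMem (by simp [proj_inf_ne_pt]) (Set.toFinite _),
          Set.ncard_pair (fun hpp => hc ((proj_pt_inj hpp).symm))]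
      · have hba : a + b + a = b := by
          rw [add_comm a b, add_assoc, CharTwo.add_self_eq_zero, add_zero]
        have hbb : a + b + b = a := by
          rw [add_assoc, CharTwo.add_self_eq_zero, add_zero]
        rw [hga, hhb]
        rw [show ({proj_inf, proj_pt 0, proj_pt (a + b)} : Set (Proj (GaloisField 2 m)))
          = insert proj_inf (insert (proj_pt 0) {proj_pt (a + b)}) from rfl]
        rw [Set.smul_set_insert, Set.smul_set_insert, Set.smul_set_singleton,
          Set.smul_set_insert, Set.smul_set_insert, Set.smul_set_singleton,
          unip_smul_inf, unip_smul_inf, unip_smul_pt, unip_smul_pt, unip_smul_pt,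
          unip_smul_pt, zero_add, zero_add, hba, hbb]
        rw [Set.pair_comm (proj_pt a) (proj_pt b)]
end

section
/- Let q be an odd prime power with q ≡ 1 (mod 4) and let A ∈ GL(2,F_q). If the permutation of ℙ¹(F_q) induced by A maps some 3-element subset of ℙ¹(F_q) onto itself, then det A is a square in F_q. (Equivalently: every element of PGL(2,F_q) not lying in PSL(2,F_q) is a derangement for the action on 3-subsets.) -/
open scoped Pointwise MatrixGroups

/-!
An element of `GL(2, K)` fixing three distinct points of `ℙ¹(K)` is scalar, since its eigenvalues
on two independent eigenvectors must agree on a third eigenvector that involves both.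
A permutation of a 3-set either has cube `1` or is a transposition. In the first case `A³ = c • 1`,
so `(det A)³ = c²` and `det A` is a square. In the second case `A² = c • 1` with `c = μ²` for the
eigenvalue `μ` at the fixed point, while `A` itself is not scalar; Cayley–Hamilton then forces
`tr A = 0`, hence `det A = -μ²`, which is a square because `q ≡ 1 (mod 4)` makes `-1` a square.
-/

theorem Equiv.Perm.pow_three_eq_one_or_sq_eq_one_of_card_eq_three {α : Type*} [Finite α]
    (hα : Nat.card α = 3) (σ : Equiv.Perm α) :
    σ ^ 3 = 1 ∨ (σ ^ 2 = 1 ∧ (∃ a, σ a = a) ∧ σ ≠ 1) := by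
  have hFin3 : ∀ τ : Equiv.Perm (Fin 3), τ ^ 3 = 1 ∨ (τ ^ 2 = 1 ∧ (∃ a, τ a = a) ∧ τ ≠ 1) := by
    decide
  let f := Finite.equivFinOfCardEq hα
  have hpow (n : ℕ) : f.permCongrHom σ ^ n = 1 ↔ σ ^ n = 1 := by
    rw [← map_pow, map_eq_one_iff _ (MulEquiv.injective _)]
  have hfix : (∃ a, f.permCongrHom σ a = a) ↔ ∃ a, σ a = a := by
    simp [f.surjective.exists, Equiv.permCongr_apply]
  have hne := hpow 1
  rw [pow_one, pow_one] at hne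
  simpa only [hpow, hfix, ne_eq, hne] using hFin3 (f.permCongrHom σ)

theorem MulAction.pow_three_fixes_or_sq_fixes_of_ncard_eq_three {G α : Type*} [Group G]
    [MulAction G α] {g : G} {S : Set α} (hS : S.ncard = 3) (hg : g • S = S) :
    (∀ x ∈ S, g ^ 3 • x = x) ∨
      ((∀ x ∈ S, g ^ 2 • x = x) ∧ (∃ x ∈ S, g • x = x) ∧ ∃ x ∈ S, g • x ≠ x) := by
  have : Finite S := Set.finite_of_ncard_ne_zero (by omega)
  have hmaps (x : α) : MulAction.toPerm g x ∈ S ↔ x ∈ S := by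
    conv_lhs => rw [← hg]
    exact Set.smul_mem_smul_set_iff
  let σ := (MulAction.toPerm g).subtypePerm hmaps
  have hpow (n : ℕ) : σ ^ n = 1 ↔ ∀ x ∈ S, g ^ n • x = x := by
    have : MulAction.toPerm g ^ n = MulAction.toPerm (g ^ n) :=
      (map_pow (MulAction.toPermHom G α) g n).symm
    simp [σ, Equiv.Perm.subtypePerm_pow, Equiv.ext_iff, Subtype.ext_iff, this]
  rcases Equiv.Perm.pow_three_eq_one_or_sq_eq_one_of_card_eq_three (by simpa using hS) σ with
    h3 | ⟨h2, ⟨a, ha⟩, hne⟩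
  · exact .inl ((hpow 3).mp h3)
  · refine .inr ⟨(hpow 2).mp h2, ⟨a, a.2, congrArg Subtype.val ha⟩, ?_⟩
    simpa using mt (hpow 1).mpr hne

theorem Module.End.eq_smul_one_of_three_eigenvectors {K V : Type*} [Field K] [AddCommGroup V]
    [Module K V] (hV : Module.finrank K V = 2) {f : Module.End K V} {u v w : V} {α β γ : K}
    (huv : LinearIndependent K ![u, v]) (huw : LinearIndependent K ![u, w])
    (hvw : LinearIndependent K ![v, w]) (hu : f u = α • u) (hv : f v = β • v)
    (hw : f w = γ • w) : f = α • 1 := by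
  have hspan : Submodule.span K (Set.range ![u, v]) = ⊤ :=
    huv.span_eq_top_of_card_eq_finrank (by simp [hV])
  obtain ⟨a, b, rfl⟩ : ∃ a b : K, a • u + b • v = w := by
    rw [← Submodule.mem_span_pair, ← Matrix.range_cons_cons_empty u v ![], hspan]
    trivial
  have ha : a ≠ 0 := by
    rintro rfl
    simpa using LinearIndependent.pair_iff.mp hvw b (-1) (by simp)
  have hb : b ≠ 0 := by
    rintro rfl
    simpa using LinearIndependent.pair_iff.mp huw a (-1) (by simp)
  rw [map_add, map_smul, map_smul, hu, hv] at hw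
  obtain ⟨hα, hβ⟩ := LinearIndependent.pair_iff.mp huv (a * (α - γ)) (b * (β - γ))
    (by linear_combination (norm := module) hw)
  have hαβ : α = β := by
    rw [mul_eq_zero, sub_eq_zero] at hα hβ
    exact (hα.resolve_left ha).trans (hβ.resolve_left hb).symm
  refine LinearMap.ext_on_range hspan fun i => ?_
  fin_cases i <;> simp [hu, hv, hαβ]

theorem isSquare_of_isSquare_pow_of_odd {α : Type*} [CommGroupWithZero α] {a : α} {n : ℕ}
    (hn : Odd n) (h : IsSquare (a ^ n)) : IsSquare a := by
  obtain ⟨k, rfl⟩ := hn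
  obtain ⟨s, hs⟩ := h
  rcases eq_or_ne a 0 with rfl | ha
  · exact ⟨0, (mul_zero 0).symm⟩
  refine ⟨s / a ^ k, ?_⟩
  rw [div_mul_div_comm, ← hs, pow_succ, pow_mul', sq, mul_div_cancel_left₀ _ (by simp [ha])]

theorem GaloisField.isSquare_neg_one {p m : ℕ} [Fact p.Prime] (hm : m ≠ 0) (hq : p ^ m % 4 = 1) :
    IsSquare (-1 : GaloisField p m) := by
  have := Fintype.ofFinite (GaloisField p m)
  rw [FiniteField.isSquare_neg_one_iff, ← Nat.card_eq_fintype_card, GaloisField.card p m hm, hq]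
  decide

namespace Matrix

theorem sq_eq_trace_smul_sub_det_smul {R : Type*} [CommRing R] (M : Matrix (Fin 2) (Fin 2) R) :
    M ^ 2 = M.trace • M - M.det • 1 := by
  ext i j
  fin_cases i <;> fin_cases j <;> simp [sq, mul_apply, trace_fin_two, det_fin_two] <;> ring

variable {K : Type*} [Field K]

theorem isSquare_det_of_pow_eq_smul_one {M : Matrix (Fin 2) (Fin 2) K} {n : ℕ} (hn : Odd n)
    {c : K} (h : M ^ n = c • 1) : IsSquare M.det :=
  isSquare_of_isSquare_pow_of_odd hn ⟨c, by rw [← det_pow, h, det_smul]; simp [sq]⟩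

theorem det_eq_neg_of_sq_eq_smul_one {M : Matrix (Fin 2) (Fin 2) K} {c : K}
    (h : M ^ 2 = c • 1) (hM : ∀ s : K, M ≠ s • 1) : M.det = -c := by
  rw [sq_eq_trace_smul_sub_det_smul, sub_eq_iff_eq_add, ← add_smul] at h
  have htrace : M.trace = 0 := by
    by_contra htr
    refine hM (M.trace⁻¹ * (c + M.det)) ?_
    rw [mul_smul, ← h, inv_smul_smul₀ htr]
  rw [htrace, zero_smul] at h
  have hsum : c + M.det = 0 := (smul_eq_zero.mp h.symm).resolve_right one_ne_zero
  linear_combination hsum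

end Matrix

section ProjectiveLine

open Matrix

variable {K : Type*} [Field K]

theorem GL_smul_eq_self_iff (A : GL (Fin 2) K) (x : Proj K) :
    A • x = x ↔ ∃ a : K, (A : Matrix (Fin 2) (Fin 2) K) *ᵥ x.rep = a • x.rep := by
  conv_lhs => rw [← x.mk_rep]
  rw [GL_smul_mk, Projectivization.mk_eq_mk_iff']
  exact exists_congr fun _ => eq_comm

theorem GL_smul_eq_self_of_eq_smul_one {A : GL (Fin 2) K} {c : K}
    (hA : (A : Matrix (Fin 2) (Fin 2) K) = c • 1) (x : Proj K) : A • x = x :=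
  (GL_smul_eq_self_iff A x).mpr ⟨c, by rw [hA, smul_mulVec, one_mulVec]⟩

theorem GL_eq_smul_one_of_fixes_ncard_three (A : GL (Fin 2) K) {S : Set (Proj K)}
    (hS : S.ncard = 3) (hA : ∀ x ∈ S, A • x = x) :
    ∃ c : K, (A : Matrix (Fin 2) (Fin 2) K) = c • 1 := by
  obtain ⟨x, y, z, hxy, hxz, hyz, rfl⟩ := Set.ncard_eq_three.mp hS
  obtain ⟨α, hα⟩ := (GL_smul_eq_self_iff A x).mp (hA x (by simp))
  obtain ⟨β, hβ⟩ := (GL_smul_eq_self_iff A y).mp (hA y (by simp))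
  obtain ⟨γ, hγ⟩ := (GL_smul_eq_self_iff A z).mp (hA z (by simp))
  refine ⟨α, toLin'.injective ?_⟩
  rw [map_smul, toLin'_one]
  exact Module.End.eq_smul_one_of_three_eigenvectors (by simp)
    (Projectivization.linearIndependent_pair_iff_ne.mpr hxy)
    (Projectivization.linearIndependent_pair_iff_ne.mpr hxz)
    (Projectivization.linearIndependent_pair_iff_ne.mpr hyz) hα hβ hγ

theorem GL_isSquare_det_of_sq_eq_smul_one (hK : IsSquare (-1 : K)) {A : GL (Fin 2) K} {c : K}
    (hc : (A : Matrix (Fin 2) (Fin 2) K) ^ 2 = c • 1) {x y : Proj K} (hx : A • x = x)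
    (hy : A • y ≠ y) : IsSquare (A : Matrix (Fin 2) (Fin 2) K).det := by
  obtain ⟨μ, hμ⟩ := (GL_smul_eq_self_iff A x).mp hx
  have hcμ : c = μ ^ 2 := by
    refine smul_left_injective K x.rep_nonzero ?_
    calc c • x.rep = (A : Matrix (Fin 2) (Fin 2) K) ^ 2 *ᵥ x.rep := by
          rw [hc, smul_mulVec, one_mulVec]
      _ = μ ^ 2 • x.rep := by rw [sq, ← mulVec_mulVec, hμ, mulVec_smul, hμ, smul_smul, sq]
  rw [det_eq_neg_of_sq_eq_smul_one hc fun s hs => hy (GL_smul_eq_self_of_eq_smul_one hs y), hcμ,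
    neg_eq_neg_one_mul]
  exact hK.mul (IsSquare.sq μ)

end ProjectiveLine

open scoped Pointwise in
set_option synthInstance.maxHeartbeats 1000000 in
theorem det_isSquare_of_fixes_three_subset_general (p m : ℕ) [Fact p.Prime] (hm : 1 ≤ m)
    (hq : p ^ m % 4 = 1) (A : GL (Fin 2) (GaloisField p m))
    (S : Set (Proj (GaloisField p m))) (hS : S.ncard = 3) (hfix : A • S = S) :
    IsSquare ((A : Matrix (Fin 2) (Fin 2) (GaloisField p m)).det) := by
  rcases MulAction.pow_three_fixes_or_sq_fixes_of_ncard_eq_three hS hfix with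
    h3 | ⟨h2, ⟨x, -, hx⟩, ⟨y, -, hy⟩⟩
  · obtain ⟨c, hc⟩ := GL_eq_smul_one_of_fixes_ncard_three (A ^ 3) hS h3
    rw [Units.val_pow_eq_pow_val] at hc
    exact Matrix.isSquare_det_of_pow_eq_smul_one (by decide) hc
  · obtain ⟨c, hc⟩ := GL_eq_smul_one_of_fixes_ncard_three (A ^ 2) hS h2
    rw [Units.val_pow_eq_pow_val] at hc
    exact GL_isSquare_det_of_sq_eq_smul_one (GaloisField.isSquare_neg_one (by omega) hq) hc hx hy

open scoped Pointwise in
set_option synthInstance.maxHeartbeats 1000000 in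
/-- Let `q` be an odd prime power with `q ≡ 1 (mod 4)`. If the permutation of
the projective line induced by `A ∈ GL(2, F_q)` maps some 3-element subset onto itself, then
`det A` is a square in `F_q`. -/
theorem det_isSquare_of_fixes_three_subset (p m : ℕ) [Fact p.Prime] (hp : Odd p) (hm : 1 ≤ m)
    (hq : p ^ m % 4 = 1) (A : GL (Fin 2) (GaloisField p m))
    (S : Set (Proj (GaloisField p m))) (hS : S.ncard = 3) (hfix : A • S = S) :
    IsSquare ((A : Matrix (Fin 2) (Fin 2) (GaloisField p m)).det) :=
  det_isSquare_of_fixes_three_subset_general p m hm hq A S hS hfix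
end

section
/- Let q be an odd prime power with q ≡ 1 (mod 4) and let F be an intersecting subset of PGL(2,F_q) with respect to the induced action on 3-element subsets of ℙ¹(F_q). Then F is contained in a single coset of PSL(2,F_q); that is, for all g, h ∈ F one has g·h⁻¹ ∈ PSL(2,F_q). -/
open scoped Pointwise MatrixGroups

/-!
If `g • S = h • S`, then `g * h⁻¹` maps the 3-set `h • S` onto itself; lift it to
`A ∈ GL(2, q)`. A permutation of three points either has order dividing 3, or fixes a point
and has order dividing 2. A matrix fixing three points of the projective line is scalar, so in
the first case `A³ = c • 1`, whence `det A ^ 3 = c ^ 2` and `det A = (c / det A) ^ 2`. In the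
second case `A² = μ² • 1` with `μ` the eigenvalue at the fixed point, so `det A = ± μ²`, a
square because `-1` is a square when `q ≡ 1 (mod 4)`. Finally, a matrix with square
determinant `r²` is `r • 1` times an element of `SL(2, q)`, so its class lies in `PSL(2, q)`.
-/

theorem MulAction.pow_three_fixes_or_sq_fixes_of_smul_set_eq {G α : Type*} [Group G]
    [MulAction G α] {g : G} {S : Set α} (hS : S.ncard = 3) (hg : g • S = S) :
    (∀ x ∈ S, g ^ 3 • x = x) ∨ ∃ z ∈ S, g • z = z ∧ ∀ x ∈ S, g ^ 2 • x = x := by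
  obtain ⟨x, y, z, hxy, hxz, hyz, rfl⟩ := Set.ncard_eq_three.mp hS
  have hmaps : ∀ w ∈ ({x, y, z} : Set α), g • w ∈ ({x, y, z} : Set α) :=
    fun w hw ↦ hg ▸ Set.smul_mem_smul_set hw
  simp only [Set.mem_insert_iff, Set.mem_singleton_iff, forall_eq_or_imp, forall_eq,
    exists_eq_or_imp] at hmaps ⊢
  obtain ⟨hx | hx | hx, hy | hy | hy, hz | hz | hz⟩ := hmaps
  all_goals first
    | exact absurd ((smul_left_cancel_iff g).mp (hx.trans hy.symm)) hxy
    | exact absurd ((smul_left_cancel_iff g).mp (hx.trans hz.symm)) hxz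
    | exact absurd ((smul_left_cancel_iff g).mp (hy.trans hz.symm)) hyz
    | simp [pow_succ, mul_smul, hx, hy, hz]

namespace Matrix

variable {K : Type*} [Field K]

lemma det_smul_one_fin_two (c : K) : (c • (1 : Matrix (Fin 2) (Fin 2) K)).det = c ^ 2 := by
  simp

lemma isSquare_det_of_sq_eq_smul_one (hK : IsSquare (-1 : K)) {M : Matrix (Fin 2) (Fin 2) K}
    {c μ : K} {t : Fin 2 → K} (ht : t ≠ 0) (hM : M ^ 2 = c • 1) (hMt : M *ᵥ t = μ • t) :
    IsSquare M.det := by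
  have hc : c = μ ^ 2 := smul_left_injective K ht <| calc
    c • t = M ^ 2 *ᵥ t := by rw [hM, smul_mulVec, one_mulVec]
    _ = μ ^ 2 • t := by rw [sq, ← mulVec_mulVec, hMt, mulVec_smul, hMt, smul_smul, sq]
  have hdet : M.det ^ 2 = (μ ^ 2) ^ 2 := by
    rw [← det_pow, hM, hc, det_smul_one_fin_two]
  obtain ⟨i, hi⟩ := hK
  rcases sq_eq_sq_iff_eq_or_eq_neg.mp hdet with h | h
  · exact ⟨μ, by rw [h, sq]⟩
  · exact ⟨i * μ, by linear_combination h + μ ^ 2 * hi⟩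

lemma isSquare_det_of_pow_three_eq_smul_one {M : Matrix (Fin 2) (Fin 2) K} (hM0 : M.det ≠ 0)
    {c : K} (hM : M ^ 3 = c • 1) : IsSquare M.det := by
  have hdet : M.det ^ 3 = c ^ 2 := by rw [← det_pow, hM, det_smul_one_fin_two]
  refine ⟨c / M.det, ?_⟩
  field_simp
  linear_combination hdet

end Matrix

section GL2

open Matrix

variable {K : Type*} [Field K]

lemma eigenvalues_eq_of_apply_smul_add_smul {V : Type*} [AddCommGroup V] [Module K V]
    (f : V →ₗ[K] V) {v w : V} (hvw : LinearIndependent K ![v, w]) {a b c α β : K}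
    (hα : α ≠ 0) (hβ : β ≠ 0) (hv : f v = a • v) (hw : f w = b • w)
    (ht : f (α • v + β • w) = c • (α • v + β • w)) : a = c ∧ b = c := by
  rw [map_add, map_smul, map_smul, hv, hw] at ht
  obtain ⟨hac, hbc⟩ := LinearIndependent.pair_iff.mp hvw (α * (a - c)) (β * (b - c))
    (by linear_combination (norm := module) ht)
  exact ⟨sub_eq_zero.mp ((mul_eq_zero.mp hac).resolve_left hα),
    sub_eq_zero.mp ((mul_eq_zero.mp hbc).resolve_left hβ)⟩

lemma exists_mulVec_rep_eq_smul_of_smul_eq (A : GL (Fin 2) K) {x : Proj K} (hx : A • x = x) :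
    ∃ a : K, (A : Matrix (Fin 2) (Fin 2) K) *ᵥ x.rep = a • x.rep := by
  rw [← x.mk_rep, GL_smul_mk, Projectivization.mk_eq_mk_iff] at hx
  obtain ⟨a, ha⟩ := hx
  exact ⟨a, ha.symm⟩

lemma exists_eq_smul_one_of_smul_eq_self {A : GL (Fin 2) K} {S : Set (Proj K)}
    (hS : S.ncard = 3) (hA : ∀ x ∈ S, A • x = x) :
    ∃ c : K, (A : Matrix (Fin 2) (Fin 2) K) = c • 1 := by
  obtain ⟨x, y, z, hxy, hxz, hyz, rfl⟩ := Set.ncard_eq_three.mp hS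
  obtain ⟨a, ha⟩ := exists_mulVec_rep_eq_smul_of_smul_eq A (hA x (by simp))
  obtain ⟨b, hb⟩ := exists_mulVec_rep_eq_smul_of_smul_eq A (hA y (by simp))
  obtain ⟨c, hc⟩ := exists_mulVec_rep_eq_smul_of_smul_eq A (hA z (by simp))
  have hvw := Projectivization.linearIndependent_pair_iff_ne.mpr hxy
  have hspan : Submodule.span K (Set.range ![x.rep, y.rep]) = ⊤ :=
    hvw.span_eq_top_of_card_eq_finrank' (by simp)
  obtain ⟨coef, hcoef⟩ :=
    (Submodule.mem_span_range_iff_exists_fun K).mp (hspan ▸ Submodule.mem_top (x := z.rep))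
  simp only [Fin.sum_univ_two, cons_val_zero, cons_val_one, cons_val_fin_one] at hcoef
  have h0 : coef 0 ≠ 0 := fun h ↦
    (LinearIndependent.pair_iff' y.rep_nonzero).mp
      (Projectivization.linearIndependent_pair_iff_ne.mpr hyz) (coef 1) (by simpa [h] using hcoef)
  have h1 : coef 1 ≠ 0 := fun h ↦
    (LinearIndependent.pair_iff' x.rep_nonzero).mp
      (Projectivization.linearIndependent_pair_iff_ne.mpr hxz) (coef 0) (by simpa [h] using hcoef)
  obtain ⟨rfl, hbc⟩ := eigenvalues_eq_of_apply_smul_add_smul (mulVecLin A) hvw h0 h1 ha hb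
    (by rw [hcoef]; exact hc)
  refine ⟨a, toLin'.injective (LinearMap.ext_on_range hspan fun i ↦ ?_)⟩
  fin_cases i <;> simp [ha, hb, hbc]

lemma isSquare_det_of_smul_set_eq (hK : IsSquare (-1 : K)) (A : GL (Fin 2) K)
    {S : Set (Proj K)} (hS : S.ncard = 3) (hA : A • S = S) :
    IsSquare (A : Matrix (Fin 2) (Fin 2) K).det := by
  rcases MulAction.pow_three_fixes_or_sq_fixes_of_smul_set_eq hS hA with h3 | ⟨z, -, hz, h2⟩
  · obtain ⟨c, hc⟩ := exists_eq_smul_one_of_smul_eq_self hS h3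
    rw [Units.val_pow_eq_pow_val] at hc
    exact isSquare_det_of_pow_three_eq_smul_one (GeneralLinearGroup.det_ne_zero A) hc
  · obtain ⟨c, hc⟩ := exists_eq_smul_one_of_smul_eq_self hS h2
    obtain ⟨μ, hμ⟩ := exists_mulVec_rep_eq_smul_of_smul_eq A hz
    rw [Units.val_pow_eq_pow_val] at hc
    exact isSquare_det_of_sq_eq_smul_one hK z.rep_nonzero hc hμ

lemma mk_mem_PSL2_of_isSquare_det (A : GL (Fin 2) K)
    (hA : IsSquare (A : Matrix (Fin 2) (Fin 2) K).det) :
    (QuotientGroup.mk A : PGL2 K) ∈ PSL2 K := by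
  obtain ⟨r, hr⟩ := hA
  have hr0 : r ≠ 0 := by
    rintro rfl
    exact GeneralLinearGroup.det_ne_zero A (by rw [hr, mul_zero])
  let u : Kˣ := Units.mk0 r hr0
  have hB : ((GeneralLinearGroup.scalar (Fin 2) u⁻¹ * A : GL (Fin 2) K) :
      Matrix (Fin 2) (Fin 2) K).det = 1 := by
    simp [u, hr, ← sq, hr0]
  refine ⟨⟨_, hB⟩, ?_⟩
  have hscalar : (QuotientGroup.mk (GeneralLinearGroup.scalar (Fin 2) u⁻¹) : PGL2 K) = 1 :=
    (QuotientGroup.eq_one_iff _).mpr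
      (Subgroup.mem_center_iff.mpr fun g ↦ (GeneralLinearGroup.scalar_commute _ g).symm)
  have htoGL : SpecialLinearGroup.toGL ⟨_, hB⟩ = GeneralLinearGroup.scalar (Fin 2) u⁻¹ * A :=
    Units.ext rfl
  show QuotientGroup.mk' _ (SpecialLinearGroup.toGL ⟨_, hB⟩) = (A : PGL2 K)
  rw [htoGL, QuotientGroup.mk'_apply, QuotientGroup.mk_mul, hscalar, one_mul]

lemma mem_PSL2_of_smul_set_eq (hK : IsSquare (-1 : K)) {g : PGL2 K} {S : Set (Proj K)}
    (hS : S.ncard = 3) (hg : g • S = S) : g ∈ PSL2 K := by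
  obtain ⟨A, rfl⟩ := QuotientGroup.mk_surjective g
  exact mk_mem_PSL2_of_isSquare_det A (isSquare_det_of_smul_set_eq hK A hS hg)

end GL2

theorem intersecting_subset_in_coset_of_psl_general (p m : ℕ) [Fact p.Prime] (hm : 1 ≤ m)
    (hq : p ^ m % 4 = 1) (F : Set (PGL2 (GaloisField p m)))
    (hF : IntersectingOnSubsets _ (GaloisField p m) 3 F) :
    ∀ g ∈ F, ∀ h ∈ F, g * h⁻¹ ∈ PSL2 (GaloisField p m) := by
  have : Fintype (GaloisField p m) := Fintype.ofFinite _
  have hK : IsSquare (-1 : GaloisField p m) := by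
    rw [FiniteField.isSquare_neg_one_iff, ← Nat.card_eq_fintype_card,
      GaloisField.card p m (by omega), hq]
    omega
  intro g hg h hh
  obtain ⟨S, hS, hgh⟩ := hF g hg h hh
  refine mem_PSL2_of_smul_set_eq hK (S := h • S) (by rwa [Set.ncard_smul_set]) ?_
  rw [mul_smul, inv_smul_smul, hgh]

/-- Let `q` be an odd prime power with `q ≡ 1 (mod 4)`. Any intersecting subset
of `PGL(2, F_q)` for the action on 3-element subsets of the projective line lies in a single
coset of `PSL(2, F_q)`. -/
theorem intersecting_subset_in_coset_of_psl (p m : ℕ) [Fact p.Prime] (hp : Odd p) (hm : 1 ≤ m)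
    (hq : p ^ m % 4 = 1) (F : Set (PGL2 (GaloisField p m)))
    (hF : IntersectingOnSubsets _ (GaloisField p m) 3 F) :
    ∀ g ∈ F, ∀ h ∈ F, g * h⁻¹ ∈ PSL2 (GaloisField p m) :=
  intersecting_subset_in_coset_of_psl_general p m hm hq F hF
end

section
/- Let q = 3^m with m ≥ 1 and F_q = GaloisField 3 m. The images in PGL(2,F_q) of the 2q matrices [[1, x], [0, 1]] and [[1, x], [0, −1]] with x ∈ F_q form a subgroup of PGL(2,F_q) of order 2q, and this subgroup is an intersecting set with respect to the induced action on 3-element subsets of ℙ¹(F_q). -/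
open scoped Pointwise MatrixGroups

set_option synthInstance.maxHeartbeats 1000000
set_option maxHeartbeats 1600000

noncomputable section

namespace MyAux

variable {K : Type*} [Field K]

/-- unipotent unit -/
def upU (x : K) : GL (Fin 2) K :=
  ⟨!![1,x;0,1], !![1,-x;0,1],
    by rw [Matrix.mul_fin_two, Matrix.one_fin_two]; norm_num,
    by rw [Matrix.mul_fin_two, Matrix.one_fin_two]; norm_num⟩

/-- reflection unit -/
def refU (x : K) : GL (Fin 2) K :=
  ⟨!![1,x;0,-1], !![1,x;0,-1],
    by rw [Matrix.mul_fin_two, Matrix.one_fin_two]; norm_num,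
    by rw [Matrix.mul_fin_two, Matrix.one_fin_two]; norm_num⟩

@[simp] lemma upU_val (x : K) : (upU x : Matrix (Fin 2) (Fin 2) K) = !![1,x;0,1] := rfl
@[simp] lemma refU_val (x : K) : (refU x : Matrix (Fin 2) (Fin 2) K) = !![1,x;0,-1] := rfl

/-- The subgroup of `GL(2,K)` of matrices `[[1,x],[0,±1]]`. -/
def subM (K : Type*) [Field K] : Subgroup (GL (Fin 2) K) where
  carrier := {A | ∃ x : K,
    (A : Matrix (Fin 2) (Fin 2) K) = !![1, x; 0, 1] ∨
    (A : Matrix (Fin 2) (Fin 2) K) = !![1, x; 0, -1]}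
  one_mem' := ⟨0, Or.inl (by rw [Units.val_one, Matrix.one_fin_two])⟩
  mul_mem' := by
    rintro A B hAm hBm
    obtain ⟨x, hA | hA⟩ := hAm <;> obtain ⟨y, hB | hB⟩ := hBm
    · exact ⟨y + x, Or.inl (by rw [Units.val_mul, hA, hB, Matrix.mul_fin_two]; norm_num)⟩
    · exact ⟨y - x, Or.inr (by rw [Units.val_mul, hA, hB, Matrix.mul_fin_two]; norm_num; ring)⟩
    · exact ⟨y + x, Or.inr (by rw [Units.val_mul, hA, hB, Matrix.mul_fin_two]; norm_num)⟩
    · exact ⟨y - x, Or.inl (by rw [Units.val_mul, hA, hB, Matrix.mul_fin_two]; norm_num; ring)⟩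
  inv_mem' := by
    rintro A hAm
    obtain ⟨x, hA | hA⟩ := hAm
    · have : A = upU x := Units.ext hA
      subst this
      exact ⟨-x, Or.inl rfl⟩
    · have : A = refU x := Units.ext hA
      subst this
      exact ⟨x, Or.inr rfl⟩

lemma mem_subM_iff (A : GL (Fin 2) K) : A ∈ subM K ↔ ∃ x : K,
    (A : Matrix (Fin 2) (Fin 2) K) = !![1, x; 0, 1] ∨
    (A : Matrix (Fin 2) (Fin 2) K) = !![1, x; 0, -1] := Iff.rfl

lemma carrier_eq (K : Type*) [Field K] :
    ((subM K : Set (GL (Fin 2) K))) = Set.range (upU (K := K)) ∪ Set.range (refU (K := K)) := by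
  ext A
  rw [SetLike.mem_coe, mem_subM_iff]
  constructor
  · rintro ⟨x, h | h⟩
    · exact Or.inl ⟨x, (Units.ext h).symm⟩
    · exact Or.inr ⟨x, (Units.ext h).symm⟩
  · rintro (⟨x, rfl⟩ | ⟨x, rfl⟩)
    · exact ⟨x, Or.inl rfl⟩
    · exact ⟨x, Or.inr rfl⟩

variable (h2 : (2 : K) ≠ 0)

include h2 in
lemma subM_center (A : GL (Fin 2) K) (hA : A ∈ subM K)
    (hc : A ∈ Subgroup.center (GL (Fin 2) K)) : A = 1 := by
  obtain ⟨x, h | h⟩ := (mem_subM_iff A).mp hA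
  · -- commute with swap
    set s : GL (Fin 2) K := ⟨!![0,1;1,0], !![0,1;1,0],
      by rw [Matrix.mul_fin_two, Matrix.one_fin_two]; norm_num,
      by rw [Matrix.mul_fin_two, Matrix.one_fin_two]; norm_num⟩ with hs
    have hcs := Subgroup.mem_center_iff.mp hc s
    have hval := congrArg Units.val hcs
    rw [Units.val_mul, Units.val_mul, h] at hval
    have hsv : (s : Matrix (Fin 2) (Fin 2) K) = !![0,1;1,0] := rfl
    rw [hsv, Matrix.mul_fin_two, Matrix.mul_fin_two] at hval
    have hx := congrFun (congrFun hval 0) 0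
    norm_num at hx
    apply Units.ext
    rw [h, ← hx, Units.val_one, Matrix.one_fin_two]
  · exfalso
    set s : GL (Fin 2) K := ⟨!![0,1;1,0], !![0,1;1,0],
      by rw [Matrix.mul_fin_two, Matrix.one_fin_two]; norm_num,
      by rw [Matrix.mul_fin_two, Matrix.one_fin_two]; norm_num⟩ with hs
    have hcs := Subgroup.mem_center_iff.mp hc s
    have hval := congrArg Units.val hcs
    rw [Units.val_mul, Units.val_mul, h] at hval
    have hsv : (s : Matrix (Fin 2) (Fin 2) K) = !![0,1;1,0] := rfl
    rw [hsv, Matrix.mul_fin_two, Matrix.mul_fin_two] at hval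
    have hx := congrFun (congrFun hval 1) 0
    norm_num at hx
    -- hx : something giving 1 = -1
    apply h2
    linear_combination hx

lemma upU_injective : Function.Injective (upU (K := K)) := by
  intro a b hab
  have := congrArg (fun A : GL (Fin 2) K => (A : Matrix (Fin 2) (Fin 2) K) 0 1) hab
  simpa using this

lemma refU_injective : Function.Injective (refU (K := K)) := by
  intro a b hab
  have := congrArg (fun A : GL (Fin 2) K => (A : Matrix (Fin 2) (Fin 2) K) 0 1) hab
  simpa using this

include h2 in
lemma upU_ne_refU (x y : K) : upU x ≠ refU y := by
  intro h
  have := congrArg (fun A : GL (Fin 2) K => (A : Matrix (Fin 2) (Fin 2) K) 1 1) h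
  simp at this
  apply h2
  linear_combination this

include h2 in
lemma card_subM [Finite K] : Nat.card (subM K) = 2 * Nat.card K := by
  rw [← SetLike.coe_sort_coe, Nat.card_coe_set_eq, carrier_eq,
    Set.ncard_union_eq ?disj]
  · rw [show Set.range (upU (K := K)) = upU '' Set.univ by rw [Set.image_univ],
      show Set.range (refU (K := K)) = refU '' Set.univ by rw [Set.image_univ],
      Set.ncard_image_of_injOn (upU_injective.injOn),
      Set.ncard_image_of_injOn (refU_injective.injOn), Set.ncard_univ]
    ring
  case disj =>
    rw [Set.disjoint_left]
    rintro A ⟨x, rfl⟩ ⟨y, hy⟩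
    exact upU_ne_refU h2 x y hy.symm


-- Projective line points
def pt (b : K) : Proj K :=
  Projectivization.mk K ![b, 1] (by
    intro h; have := congrFun h 1; simp at this)

def inftyPt (K : Type*) [Field K] : Proj K :=
  Projectivization.mk K ![1, 0] (by
    intro h; have := congrFun h 0; simp at this)

lemma pt_injective : Function.Injective (pt (K := K)) := by
  intro a b hab
  rw [pt, pt, Projectivization.mk_eq_mk_iff] at hab
  obtain ⟨c, hc⟩ := hab
  have h1 := congrFun hc 1
  have h0 := congrFun hc 0
  simp [Units.smul_def] at h1 h0
  rw [h1] at h0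
  simpa using h0.symm

lemma inftyPt_ne_pt (b : K) : inftyPt K ≠ pt b := by
  rw [inftyPt, pt, Ne, Projectivization.mk_eq_mk_iff]
  rintro ⟨c, hc⟩
  have h1 := congrFun hc 1
  simp [Units.smul_def] at h1

lemma upU_smul_pt (x b : K) : upU x • pt b = pt (b + x) := by
  rw [pt, pt, GL_smul_mk, Projectivization.mk_eq_mk_iff]
  refine ⟨1, ?_⟩
  funext i
  fin_cases i <;>
    simp [Units.smul_def, upU, Matrix.mulVec, dotProduct, Fin.sum_univ_two]

lemma refU_smul_pt (x b : K) : refU x • pt b = pt (-b - x) := by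
  rw [pt, pt, GL_smul_mk, Projectivization.mk_eq_mk_iff]
  refine ⟨-1, ?_⟩
  funext i
  fin_cases i <;>
    simp [Units.smul_def, refU, Matrix.mulVec, dotProduct, Fin.sum_univ_two] <;> ring

lemma refU_smul_infty (x : K) : refU x • inftyPt K = inftyPt K := by
  rw [inftyPt, GL_smul_mk, Projectivization.mk_eq_mk_iff]
  refine ⟨1, ?_⟩
  funext i
  fin_cases i <;>
    simp [Units.smul_def, refU, Matrix.mulVec, dotProduct, Fin.sum_univ_two]

variable (h3 : (3 : K) = 0)

include h3 in
lemma two_ne_zero' : (2 : K) ≠ 0 := by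
  intro h2
  have : (1 : K) = 0 := by linear_combination h3 - h2
  exact one_ne_zero this

include h3 in
/-- every element of `subM` fixes setwise some 3-element subset of the projective line -/
lemma exists_fixed_triple (A : GL (Fin 2) K) (hA : A ∈ subM K) :
    ∃ S : Set (Proj K), S.ncard = 3 ∧ A • S = S := by
  have h2 := two_ne_zero' h3
  obtain ⟨x, h | h⟩ := (mem_subM_iff A).mp hA
  · have hA' : A = upU x := Units.ext h
    subst hA'
    by_cases hx : x = 0
    · subst hx
      have hA1 : upU (0 : K) = 1 := Units.ext (by
        rw [upU_val, Units.val_one, Matrix.one_fin_two])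
      refine ⟨{inftyPt K, pt 0, pt 1}, ?_, by rw [hA1, one_smul]⟩
      rw [Set.ncard_insert_of_notMem (by
          rintro (h | h) <;> exact inftyPt_ne_pt _ h),
        Set.ncard_pair (fun h => by simpa using pt_injective h)]
    · refine ⟨{pt 0, pt x, pt (x + x)}, ?_, ?_⟩
      · have hxx : x ≠ x + x := fun h => hx (by linear_combination -h)
        have h0x : (0 : K) ≠ x := fun h => hx h.symm
        have h0xx : (0 : K) ≠ x + x := fun h => hx (by
          rcases mul_eq_zero.mp (show (2 : K) * x = 0 by linear_combination -h) with h' | h'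
          · exact absurd h' h2
          · exact h')
        rw [Set.ncard_insert_of_notMem (by
            rintro (h | h) <;> [exact h0x (pt_injective h); exact h0xx (pt_injective h)]),
          Set.ncard_pair (fun h => hxx (pt_injective h))]
      · rw [Set.smul_set_insert, Set.smul_set_insert, Set.smul_set_singleton,
          upU_smul_pt, upU_smul_pt, upU_smul_pt]
        have e1 : (0 : K) + x = x := by ring
        have e2 : x + x + x = 0 := by linear_combination x * h3
        rw [e1, e2]
        ext y
        simp only [Set.mem_insert_iff, Set.mem_singleton_iff]
        tauto
  · have hA' : A = refU x := Units.ext h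
    subst hA'
    refine ⟨{inftyPt K, pt (x + 1), pt (x - 1)}, ?_, ?_⟩
    · have hne : x + 1 ≠ x - 1 := fun h => h2 (by linear_combination h)
      rw [Set.ncard_insert_of_notMem (by
          rintro (h | h) <;> exact inftyPt_ne_pt _ h),
        Set.ncard_pair (fun h => hne (pt_injective h))]
    · rw [Set.smul_set_insert, Set.smul_set_insert, Set.smul_set_singleton,
        refU_smul_infty, refU_smul_pt, refU_smul_pt]
      have e1 : -(x + 1) - x = x - 1 := by linear_combination -x * h3
      have e2 : -(x - 1) - x = x + 1 := by linear_combination -x * h3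
      rw [e1, e2]
      ext y
      simp only [Set.mem_insert_iff, Set.mem_singleton_iff]
      tauto

end MyAux

end


/-- For `q = 3^m`, the images in `PGL(2, F_q)` of the `2q` matrices
`[[1, x], [0, 1]]` and `[[1, x], [0, -1]]` (`x ∈ F_q`) form a subgroup of order `2q` which is
intersecting for the action on 3-element subsets of the projective line. -/
theorem pgl2_order_2q_intersecting_subgroup (m : ℕ) (hm : 1 ≤ m) :
    ∃ U : Subgroup (PGL2 (GaloisField 3 m)),
      (U : Set (PGL2 (GaloisField 3 m))) =
        (QuotientGroup.mk' (Subgroup.center (GL (Fin 2) (GaloisField 3 m)))) ''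
          {A : GL (Fin 2) (GaloisField 3 m) | ∃ x : GaloisField 3 m,
            (A : Matrix (Fin 2) (Fin 2) (GaloisField 3 m)) = !![1, x; 0, 1] ∨
            (A : Matrix (Fin 2) (Fin 2) (GaloisField 3 m)) = !![1, x; 0, -1]} ∧
      Nat.card U = 2 * 3 ^ m ∧
      IntersectingOnSubsets _ (GaloisField 3 m) 3 (U : Set (PGL2 (GaloisField 3 m))) := by
  classical
  haveI : Fact (Nat.Prime 3) := ⟨by norm_num⟩
  set K := GaloisField 3 m with hK
  have h3 : (3 : K) = 0 := by
    have := CharP.cast_eq_zero K 3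
    exact_mod_cast this
  have h2 : (2 : K) ≠ 0 := MyAux.two_ne_zero' h3
  set π := QuotientGroup.mk' (Subgroup.center (GL (Fin 2) K)) with hπ
  refine ⟨(MyAux.subM K).map π, ?_, ?_, ?_⟩
  · rw [Subgroup.coe_map]
    rfl
  · have hinj : Set.InjOn π ((MyAux.subM K) : Set (GL (Fin 2) K)) := by
      intro a ha b hb hab
      obtain ⟨z, hz, hza⟩ := (QuotientGroup.mk'_eq_mk' _).mp hab
      have hzz : z = a⁻¹ * b := by rw [← hza]; group
      have hzM : z ∈ MyAux.subM K := by
        rw [hzz]; exact mul_mem (inv_mem ha) hb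
      have hz1 : z = 1 := MyAux.subM_center h2 z hzM hz
      rw [hz1, mul_one] at hza
      exact hza
    rw [← SetLike.coe_sort_coe, Nat.card_coe_set_eq, Subgroup.coe_map,
      Set.ncard_image_of_injOn hinj, ← Nat.card_coe_set_eq, SetLike.coe_sort_coe,
      MyAux.card_subM h2, GaloisField.card 3 m (by omega)]
  · intro g hg h hh
    rw [SetLike.mem_coe, Subgroup.mem_map] at hg hh
    obtain ⟨a, ha, rfl⟩ := hg
    obtain ⟨b, hb, rfl⟩ := hh
    have hc : a⁻¹ * b ∈ MyAux.subM K := mul_mem (inv_mem ha) hb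
    obtain ⟨S, hS3, hSfix⟩ := MyAux.exists_fixed_triple h3 (a⁻¹ * b) hc
    refine ⟨S, hS3, ?_⟩
    have hset : ∀ (u : GL (Fin 2) K) (T : Set (Proj K)), (π u) • T = u • T := by
      intro u T
      ext y
      simp only [Set.mem_smul_set]
      constructor
      · rintro ⟨z, hz, rfl⟩
        exact ⟨z, hz, (PGL2_smul_mk' u z).symm⟩
      · rintro ⟨z, hz, rfl⟩
        exact ⟨z, hz, PGL2_smul_mk' u z⟩
    have hb' : b = a * (a⁻¹ * b) := by group
    calc π a • S = π a • ((a⁻¹ * b) • S) := by rw [hSfix]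
      _ = π a • (π (a⁻¹ * b) • S) := by rw [hset (a⁻¹ * b) S]
      _ = (π a * π (a⁻¹ * b)) • S := (mul_smul _ _ _).symm
      _ = π b • S := by rw [← map_mul, ← hb']
end

section
/- Let q = 3^m with m ≥ 1 and F_q = GaloisField 3 m. The set of matrices [[1, x], [0, 1]] with x ∈ F_q is a subgroup of SL(2,F_q) of order q, its image in PSL(2,F_q) also has order q, and this image is an intersecting set with respect to the induced action on 3-element subsets of ℙ¹(F_q). -/
open scoped Pointwise MatrixGroups

noncomputable section
variable {K : Type*} [Field K]

lemma vec_ne_zero (a : K) : ![a, (1:K)] ≠ 0 := by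
  intro h; have := congrFun h 1; simp at this

lemma mk_affine_eq {a b : K} :
    Projectivization.mk K ![a,1] (vec_ne_zero a) = Projectivization.mk K ![b,1] (vec_ne_zero b)
      ↔ a = b := by
  rw [Projectivization.mk_eq_mk_iff]
  constructor
  · rintro ⟨u, hu⟩
    have h1 := congrFun hu 1
    have h0 := congrFun hu 0
    simp [Units.smul_def, smul_eq_mul] at h1 h0
    rw [h1] at h0
    simpa using h0.symm
  · rintro rfl; exact ⟨1, by simp⟩

lemma mulVec_uni (x z : K) :
    (!![1,x;0,1] : Matrix (Fin 2) (Fin 2) K).mulVec ![z,1] = ![z+x,1] := by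
  funext i
  fin_cases i <;> simp [Matrix.mulVec, dotProduct, Fin.sum_univ_two, add_comm]

lemma SL2_smul_mk (M : Matrix.SpecialLinearGroup (Fin 2) K) (v : Fin 2 → K) (hv : v ≠ 0) :
    SLtoPGL2 K M • Projectivization.mk K v hv =
      Projectivization.mk K ((M : Matrix (Fin 2) (Fin 2) K).mulVec v)
        (GLmulVec_ne_zero (Matrix.SpecialLinearGroup.toGL M) hv) := by
  show (QuotientGroup.mk (Matrix.SpecialLinearGroup.toGL M) : PGL2 K) • _ = _
  rw [PGL2_smul_mk', GL_smul_mk]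
  rfl

lemma mk_congr {v w : Fin 2 → K} (hv : v ≠ 0) (hw : w ≠ 0) (h : v = w) :
    Projectivization.mk K v hv = Projectivization.mk K w hw := by subst h; rfl

lemma uni_S_ncard {t : K} (ht : t ≠ 0) (h3 : (3:K) = 0) :
    ({Projectivization.mk K ![0,1] (vec_ne_zero 0),
      Projectivization.mk K ![t,1] (vec_ne_zero t),
      Projectivization.mk K ![t+t,1] (vec_ne_zero (t+t))} : Set (Proj K)).ncard = 3 := by
  have h1 : t ≠ t + t := fun h => ht (by linear_combination -h)
  have h2 : (0:K) ≠ t := fun h => ht h.symm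
  have h4 : (0:K) ≠ t + t := fun h => ht (by linear_combination t*h3 + h)
  rw [Set.ncard_insert_of_notMem, Set.ncard_insert_of_notMem, Set.ncard_singleton]
  · simp only [Set.mem_singleton_iff, mk_affine_eq]; exact h1
  · simp only [Set.mem_insert_iff, Set.mem_singleton_iff, mk_affine_eq]
    push_neg
    exact ⟨h2, h4⟩

lemma SL_uni_smul {M : Matrix.SpecialLinearGroup (Fin 2) K} {t : K}
    (hM : (M : Matrix (Fin 2) (Fin 2) K) = !![1,t;0,1]) (z : K) :
    SLtoPGL2 K M • Projectivization.mk K ![z,1] (vec_ne_zero z) =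
      Projectivization.mk K ![z+t,1] (vec_ne_zero (z+t)) := by
  rw [SL2_smul_mk]
  exact mk_congr _ _ (by rw [hM, mulVec_uni])

lemma uni_S_smul (h3 : (3:K) = 0) {M : Matrix.SpecialLinearGroup (Fin 2) K} {t : K}
    (hM : (M : Matrix (Fin 2) (Fin 2) K) = !![1,t;0,1]) :
    SLtoPGL2 K M • ({Projectivization.mk K ![0,1] (vec_ne_zero 0),
      Projectivization.mk K ![t,1] (vec_ne_zero t),
      Projectivization.mk K ![t+t,1] (vec_ne_zero (t+t))} : Set (Proj K)) =
    {Projectivization.mk K ![0,1] (vec_ne_zero 0),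
      Projectivization.mk K ![t,1] (vec_ne_zero t),
      Projectivization.mk K ![t+t,1] (vec_ne_zero (t+t))} := by
  rw [Set.smul_set_insert, Set.smul_set_insert, Set.smul_set_singleton,
    SL_uni_smul hM 0, SL_uni_smul hM t, SL_uni_smul hM (t+t)]
  have e1 : Projectivization.mk K ![0+t,1] (vec_ne_zero (0+t)) =
      Projectivization.mk K ![t,1] (vec_ne_zero t) := mk_congr _ _ (by rw [zero_add])
  have e2 : Projectivization.mk K ![t+t+t,1] (vec_ne_zero (t+t+t)) =
      Projectivization.mk K ![0,1] (vec_ne_zero 0) :=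
    mk_congr _ _ (by rw [show t+t+t = 0 from by linear_combination t*h3])
  rw [e1, e2]
  ext z
  simp only [Set.mem_insert_iff, Set.mem_singleton_iff]
  tauto


end

/-- For `q = 3^m`, the unipotent upper-triangular matrices form a subgroup of
`SL(2, F_q)` of order `q`; its image in `PSL(2, F_q)` also has order `q` and is intersecting
for the action on 3-element subsets of the projective line. -/
theorem unipotent_image_in_psl2_intersecting (m : ℕ) (hm : 1 ≤ m) :
    ∃ U : Subgroup (Matrix.SpecialLinearGroup (Fin 2) (GaloisField 3 m)),
      (U : Set (Matrix.SpecialLinearGroup (Fin 2) (GaloisField 3 m))) =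
        {M : Matrix.SpecialLinearGroup (Fin 2) (GaloisField 3 m) | ∃ x : GaloisField 3 m,
          (M : Matrix (Fin 2) (Fin 2) (GaloisField 3 m)) = !![1, x; 0, 1]} ∧
      Nat.card U = 3 ^ m ∧
      Subgroup.map (SLtoPGL2 (GaloisField 3 m)) U ≤ PSL2 (GaloisField 3 m) ∧
      Nat.card (Subgroup.map (SLtoPGL2 (GaloisField 3 m)) U) = 3 ^ m ∧
      IntersectingOnSubsets _ (GaloisField 3 m) 3
        ((Subgroup.map (SLtoPGL2 (GaloisField 3 m)) U : Subgroup (PGL2 (GaloisField 3 m))) :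
          Set (PGL2 (GaloisField 3 m))) := by
  classical
  have h3 : (3:GaloisField 3 m) = 0 := CharP.cast_eq_zero (GaloisField 3 m) 3
  have hdet : ∀ x : GaloisField 3 m, Matrix.det !![1,x;0,1] = 1 := fun x => by
    simp [Matrix.det_fin_two_of]
  let U : Subgroup (Matrix.SpecialLinearGroup (Fin 2) (GaloisField 3 m)) :=
    { carrier := {M | ∃ x : GaloisField 3 m,
        (M : Matrix (Fin 2) (Fin 2) (GaloisField 3 m)) = !![1,x;0,1]}
      mul_mem' := by
        rintro a b ⟨x, hx⟩ ⟨y, hy⟩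
        refine ⟨y + x, ?_⟩
        rw [Matrix.SpecialLinearGroup.coe_mul, hx, hy, Matrix.mul_fin_two]
        norm_num
      one_mem' := ⟨0, by rw [Matrix.SpecialLinearGroup.coe_one, Matrix.one_fin_two]⟩
      inv_mem' := by
        rintro a ⟨x, hx⟩
        refine ⟨-x, ?_⟩
        rw [Matrix.SpecialLinearGroup.coe_inv, hx, Matrix.adjugate_fin_two]
        norm_num }
  have hUcard : Nat.card U = 3 ^ m := by
    have e : GaloisField 3 m ≃ U :=
      { toFun := fun x => ⟨⟨!![1,x;0,1], hdet x⟩, ⟨x, rfl⟩⟩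
        invFun := fun u => (u.1 : Matrix (Fin 2) (Fin 2) (GaloisField 3 m)) 0 1
        left_inv := fun x => by simp
        right_inv := fun u => by
          obtain ⟨x, hx⟩ := u.2
          refine Subtype.ext (Subtype.ext ?_)
          show !![1, (u.1 : Matrix (Fin 2) (Fin 2) (GaloisField 3 m)) 0 1; 0, 1] = _
          rw [hx]
          norm_num }
    rw [← Nat.card_congr e]
    exact GaloisField.card 3 m (by omega)
  refine ⟨U, rfl, hUcard, Subgroup.map_le_range _ _, ?_, ?_⟩
  · -- card of image
    have hinj : Set.InjOn (SLtoPGL2 (GaloisField 3 m)) (U : Set _) := by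
      rintro a ⟨x, hx⟩ b ⟨y, hy⟩ hab
      have h0 := congrArg
        (fun g => g • Projectivization.mk (GaloisField 3 m) ![0,1]
          (vec_ne_zero (0 : GaloisField 3 m))) hab
      simp only [SL_uni_smul hx 0, SL_uni_smul hy 0] at h0
      rw [mk_affine_eq] at h0
      have hxy : x = y := by linear_combination h0
      exact Subtype.ext (hx.trans (hxy ▸ hy.symm))
    have hcoe : ((Subgroup.map (SLtoPGL2 (GaloisField 3 m)) U :
        Subgroup (PGL2 (GaloisField 3 m))) : Set (PGL2 (GaloisField 3 m))) =
        SLtoPGL2 (GaloisField 3 m) '' (U : Set _) := Subgroup.coe_map _ _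
    show Nat.card ((Subgroup.map (SLtoPGL2 (GaloisField 3 m)) U :
        Set (PGL2 (GaloisField 3 m)))) = 3 ^ m
    rw [Nat.card_coe_set_eq, hcoe, Set.ncard_image_of_injOn hinj,
      ← Nat.card_coe_set_eq]
    exact hUcard
  · -- intersecting
    rintro g hg h hh
    rw [SetLike.mem_coe, Subgroup.mem_map] at hg hh
    obtain ⟨a, haU, rfl⟩ := hg
    obtain ⟨b, hbU, rfl⟩ := hh
    obtain ⟨x, hx⟩ := haU
    obtain ⟨y, hy⟩ := hbU
    by_cases hxy : x = y
    · subst hxy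
      have hab : a = b := Subtype.ext (hx.trans hy.symm)
      subst hab
      exact ⟨_, uni_S_ncard (one_ne_zero (α := GaloisField 3 m)) h3, rfl⟩
    · have htne : x - y ≠ 0 := sub_ne_zero.mpr hxy
      have hc : ((b⁻¹ * a : Matrix.SpecialLinearGroup (Fin 2) (GaloisField 3 m)) :
          Matrix (Fin 2) (Fin 2) (GaloisField 3 m)) = !![1, x - y; 0, 1] := by
        rw [Matrix.SpecialLinearGroup.coe_mul, Matrix.SpecialLinearGroup.coe_inv, hy, hx,
          Matrix.adjugate_fin_two, Matrix.mul_fin_two]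
        norm_num
        ring_nf
      refine ⟨_, uni_S_ncard htne h3, ?_⟩
      have key := uni_S_smul h3 hc
      calc SLtoPGL2 (GaloisField 3 m) a •
            ({Projectivization.mk (GaloisField 3 m) ![0,1] (vec_ne_zero 0),
              Projectivization.mk (GaloisField 3 m) ![x-y,1] (vec_ne_zero (x-y)),
              Projectivization.mk (GaloisField 3 m) ![(x-y)+(x-y),1]
                (vec_ne_zero ((x-y)+(x-y)))} : Set (Proj (GaloisField 3 m)))
          = SLtoPGL2 (GaloisField 3 m) (b * (b⁻¹ * a)) • _ := by rw [mul_inv_cancel_left]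
        _ = SLtoPGL2 (GaloisField 3 m) b •
            (SLtoPGL2 (GaloisField 3 m) (b⁻¹ * a) • _) := by rw [map_mul, mul_smul]
        _ = SLtoPGL2 (GaloisField 3 m) b • _ := by rw [key]
end
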